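/- Let R be an NP-ring. If in a short exact sequence 0 → A → B → C → 0 of R-modules both A and C are strongly φ-w-flat, then B is strongly φ-w-flat. -/

import Mathlib

open CategoryTheory

noncomputable section

def IsGV (R : Type) [CommRing R] (J : Ideal R) : Prop :=
  J.FG ∧ Function.Bijective (fun r : R => (r • J.subtype : J →ₗ[R] R))

def IsGVTorsion (R : Type) [CommRing R] (M : Type) [AddCommGroup M] [Module R M] : Prop :=
  ∀ x : M, ∃ J : Ideal R, IsGV R J ∧ ∀ j ∈ J, j • x = 0

def IsPhiTorsion (R : Type) [CommRing R] (M : Type) [AddCommGroup M] [Module R M] : Prop :=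
  ∀ x : M, ∃ I : Ideal R, ¬ I ≤ nilradical R ∧ ∀ a ∈ I, a • x = 0

/-- `Tor_n^R(T, M)` as an object of `ModuleCat R`. -/
def TorMod (R : Type) [CommRing R] (n : ℕ) (T M : Type) [AddCommGroup T] [Module R T]
    [AddCommGroup M] [Module R M] : ModuleCat R :=
  ((Tor (ModuleCat R) n).obj (ModuleCat.of R T)).obj (ModuleCat.of R M)

/-- `M` is strongly φ-w-flat if `Tor_n^R(T, M)` is GV-torsion for every
φ-torsion module `T` and every `n ≥ 1`. -/
def IsStronglyPhiWFlat (R : Type) [CommRing R] (M : Type) [AddCommGroup M] [Module R M] : Prop :=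
  ∀ (T : Type) (_ : AddCommGroup T) (_ : Module R T), IsPhiTorsion R T →
    ∀ n : ℕ, 1 ≤ n → IsGVTorsion R (TorMod R n T M)

/-!
GV-torsion modules are closed under extensions: if a GV-ideal `J` kills the image of `y` in the
quotient, then for each of the finitely many generators `j` of `J` the element `j • y` lies in
the submodule and is killed by a GV-ideal `K j`, so the GV-ideal `J * ∏ j, K j` kills `y`.
It therefore suffices that `Tor_n(T, A) → Tor_n(T, B) → Tor_n(T, C)` is exact. This is the
horseshoe lemma: projective resolutions `P` of `A` and `Q` of `C` assemble into a projective
resolution `P ⊕ Q` of `B` whose differential is twisted by maps `θ : Q_{k+1} → P_k`, and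
`P → P ⊕ Q → Q` stays short exact after applying `T ⊗ -` because it is degreewise split.
-/

section GV

variable {R : Type} [CommRing R] {J J₁ J₂ : Ideal R}

theorem IsGV.eq_of_forall_mul_eq (hJ : IsGV R J) {r s : R} (h : ∀ j ∈ J, r * j = s * j) :
    r = s :=
  hJ.2.1 <| LinearMap.ext fun j => h j j.2

theorem IsGV.exists_eq_mul (hJ : IsGV R J) (φ : J →ₗ[R] R) : ∃ r : R, ∀ j : J, φ j = r * j := by
  obtain ⟨r, rfl⟩ := hJ.2.2 φ
  exact ⟨r, fun j => rfl⟩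

theorem isGV_top : IsGV R (⊤ : Ideal R) := by
  refine ⟨⟨{1}, by simp⟩, fun r s h => ?_, fun φ => ⟨φ ⟨1, trivial⟩, ?_⟩⟩
  · simpa using LinearMap.congr_fun h ⟨1, trivial⟩
  · ext ⟨x, hx⟩
    have hx1 : (⟨x, hx⟩ : (⊤ : Ideal R)) = x • ⟨1, trivial⟩ := by ext; simp
    simp [hx1, mul_comm]

theorem IsGV.mul (h₁ : IsGV R J₁) (h₂ : IsGV R J₂) : IsGV R (J₁ * J₂) := by
  refine ⟨h₁.1.mul h₂.1, fun r s h => ?_, fun φ => ?_⟩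
  · refine h₂.eq_of_forall_mul_eq fun q hq => h₁.eq_of_forall_mul_eq fun j hj => ?_
    simpa [mul_comm, mul_left_comm] using LinearMap.congr_fun h ⟨j * q, Ideal.mul_mem_mul hj hq⟩
  · -- For fixed `q ∈ J₂`, `j ↦ φ (j * q)` is multiplication by some `r q` (GV for `J₁`);
    -- `q ↦ r q` is linear, hence multiplication by some `s` (GV for `J₂`).
    let e₁ := LinearEquiv.ofBijective (LinearMap.toSpanSingleton R _ J₁.subtype) h₁.2
    let Φ : J₂ →ₗ[R] J₁ →ₗ[R] R := (TensorProduct.curry (φ ∘ₗ Submodule.mulMap' J₁ J₂)).flip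
    obtain ⟨s, hs⟩ := h₂.exists_eq_mul (e₁.symm.toLinearMap ∘ₗ Φ)
    refine ⟨s, (LinearMap.cancel_right (Submodule.mulMap'_surjective J₁ J₂)).1 ?_⟩
    refine TensorProduct.ext' fun j q => ?_
    have hΦ : Φ q = (s * q) • J₁.subtype := by
      rw [← hs q]
      exact (e₁.apply_symm_apply (Φ q)).symm
    simpa [Φ, mul_left_comm, mul_comm] using (LinearMap.congr_fun hΦ j).symm

theorem isGV_prod {ι : Type*} (s : Finset ι) {K : ι → Ideal R} (hK : ∀ i ∈ s, IsGV R (K i)) :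
    IsGV R (∏ i ∈ s, K i) :=
  Finset.prod_induction K (IsGV R) (fun _ _ => IsGV.mul) (Ideal.one_eq_top (R := R) ▸ isGV_top) hK

end GV

namespace IsGVTorsion

variable {R : Type} [CommRing R] {X Y Z : Type} [AddCommGroup X] [Module R X]
  [AddCommGroup Y] [Module R Y] [AddCommGroup Z] [Module R Z]

theorem of_exact {u : X →ₗ[R] Y} {v : Y →ₗ[R] Z} (h : Function.Exact u v)
    (hX : IsGVTorsion R X) (hZ : IsGVTorsion R Z) : IsGVTorsion R Y := fun y => by
  obtain ⟨J, hJ, hJy⟩ := hZ (v y)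
  obtain ⟨s, hs⟩ := hJ.1
  have hK : ∀ j ∈ s, ∃ K : Ideal R, IsGV R K ∧ ∀ b ∈ K, b • j • y = 0 := fun j hj => by
    have hjJ : j ∈ J := hs ▸ Ideal.subset_span hj
    obtain ⟨x, hx⟩ := (h (j • y)).1 (by rw [map_smul, hJy j hjJ])
    obtain ⟨K, hK, hKx⟩ := hX x
    exact ⟨K, hK, fun b hb => by rw [← hx, ← map_smul, hKx b hb, map_zero]⟩
  choose! K hKGV hKy using hK
  refine ⟨J * ∏ j ∈ s, K j, hJ.mul (isGV_prod s hKGV), fun a ha => ?_⟩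
  rw [← Submodule.mem_annihilator_span_singleton]
  have hJ_colon : J ≤ (R ∙ y).annihilator.colon (∏ j ∈ s, K j : Ideal R) := by
    rw [← hs, Ideal.span_le]
    refine fun j hj => Submodule.mem_colon.2 fun b hb => ?_
    have hbK : b ∈ K j := (Finset.inf_le hj : s.inf K ≤ K j) (Ideal.prod_le_inf hb)
    rw [Submodule.mem_annihilator_span_singleton, smul_eq_mul, mul_comm, mul_smul]
    exact hKy j hj b hbK
  exact Submodule.mul_le.2 (fun c hc b hb => Submodule.mem_colon.1 (hJ_colon hc) b hb) ha

end IsGVTorsion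

namespace CategoryTheory.ProjectiveResolution

variable {C : Type*} [Category C] [Abelian C] {Z : C} (P : ProjectiveResolution Z)

/-- The augmentation `P.π.f 0`, with codomain `Z` rather than `((single₀ C).obj Z).X 0`, so that
instances and lemmas stated over `Z` apply to it. -/
abbrev ε : P.complex.X 0 ⟶ Z := P.π.f 0

instance : Epi P.ε := inferInstanceAs (Epi (P.π.f 0))

@[simp]
lemma d_comp_ε : P.complex.d 1 0 ≫ P.ε = 0 := P.complex_d_comp_π_f_zero

lemma exact_ε : (ShortComplex.mk _ _ P.d_comp_ε).Exact := P.exact₀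

end CategoryTheory.ProjectiveResolution

namespace CategoryTheory.Functor

variable {C D : Type*} [Category C] [Abelian C] [EnoughProjectives C] [Category D] [Abelian D]

instance leftDerived_additive (F : C ⥤ D) [F.Additive] (n : ℕ) : (F.leftDerived n).Additive where
  map_add {X Y f₁ f₂} := by
    let P := ProjectiveResolution.of X
    let Q := ProjectiveResolution.of Y
    let g₁ := ProjectiveResolution.lift f₁ P Q
    let g₂ := ProjectiveResolution.lift f₂ P Q
    rw [F.leftDerived_map_eq n (f₁ + f₂) (g₁ + g₂) (by simp [g₁, g₂]),
      F.leftDerived_map_eq n f₁ g₁ (by simp [g₁]), F.leftDerived_map_eq n f₂ g₂ (by simp [g₂])]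
    simp only [Functor.comp_map, Functor.map_add]
    rw [Preadditive.add_comp, Preadditive.comp_add]

end CategoryTheory.Functor

universe u

namespace Horseshoe

variable {R : Type u} [Ring R] {S : ShortComplex (ModuleCat.{u} R)}
  (P : ProjectiveResolution S.X₁) (Q : ProjectiveResolution S.X₃)

section Augmentation

variable [Epi S.g]

def σ : Q.complex.X 0 ⟶ S.X₂ := Projective.factorThru Q.ε S.g

@[simp]
lemma σ_comp_g : σ Q ≫ S.g = Q.ε := Projective.factorThru_comp _ _

@[simp]
lemma g_σ_apply (q : Q.complex.X 0) : S.g (σ Q q) = Q.ε q :=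
  ConcreteCategory.congr_hom (σ_comp_g Q) q

abbrev X (n : ℕ) : ModuleCat R := ModuleCat.of R (P.complex.X n × Q.complex.X n)

instance (n : ℕ) : Projective (X P Q n) :=
  Projective.of_iso (ModuleCat.biprodIsoProd _ _) inferInstance

def ε : X P Q 0 ⟶ S.X₂ := ModuleCat.ofHom (LinearMap.coprod (S.f.hom ∘ₗ P.ε.hom) (σ Q).hom)

lemma ε_apply (p : P.complex.X 0) (q : Q.complex.X 0) :
    ε P Q ((p, q) : X P Q 0) = S.f (P.ε p) + σ Q q := rfl

lemma ε_surjective (hS : S.Exact) : Function.Surjective (ε P Q) := by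
  intro b
  obtain ⟨q, hq⟩ := (ModuleCat.epi_iff_surjective Q.ε).1 inferInstance (S.g b)
  obtain ⟨a, ha⟩ := (ShortComplex.moduleCat_exact_iff S).1 hS (b - σ Q q) (by simp [hq])
  obtain ⟨p, rfl⟩ := (ModuleCat.epi_iff_surjective P.ε).1 inferInstance a
  exact ⟨(p, q), by rw [ε_apply, ha, sub_add_cancel]⟩

end Augmentation

variable (hS : S.Exact) [Mono S.f] [Epi S.g]

def θZero : Q.complex.X 1 ⟶ P.complex.X 0 :=
  Projective.factorThru (hS.lift (-(Q.complex.d 1 0 ≫ σ Q)) (by simp)) P.ε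

lemma θZero_comp : θZero P Q hS ≫ P.ε ≫ S.f = -(Q.complex.d 1 0 ≫ σ Q) := by
  simp [θZero]

/- `θ k` is the off-diagonal part of the horseshoe differential; anticommuting with the
differentials is what makes it square to zero. The recursion carries two consecutive terms
because `θ (k + 2)` is a lift of `-(d ≫ θ (k + 1))` through the exactness of `P` at `k + 1`,
which needs the relation between `θ (k + 1)` and `θ k`. -/
def θPair : ∀ k : ℕ, Σ' (t : Q.complex.X (k + 1) ⟶ P.complex.X k)
    (t' : Q.complex.X (k + 2) ⟶ P.complex.X (k + 1)),
    t' ≫ P.complex.d (k + 1) k = -(Q.complex.d (k + 2) (k + 1) ≫ t)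
  | 0 => ⟨θZero P Q hS, P.exact_ε.liftFromProjective (-(Q.complex.d 2 1 ≫ θZero P Q hS)) (by
      simp [← cancel_mono S.f, θZero_comp]), ShortComplex.Exact.liftFromProjective_comp _ _ _⟩
  | k + 1 => ⟨(θPair k).2.1, (P.exact_succ k).liftFromProjective
      (-(Q.complex.d (k + 3) (k + 2) ≫ (θPair k).2.1)) (by simp [(θPair k).2.2]),
      ShortComplex.Exact.liftFromProjective_comp _ _ _⟩

def θ (k : ℕ) : Q.complex.X (k + 1) ⟶ P.complex.X k := (θPair P Q hS k).1

lemma f_ε_θ_zero_apply (q : Q.complex.X 1) :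
    S.f (P.ε (θ P Q hS 0 q)) = -σ Q (Q.complex.d 1 0 q) := by
  refine (ConcreteCategory.congr_hom (θZero_comp P Q hS) q).trans ?_
  simp

lemma θ_succ_comp_d (k : ℕ) :
    θ P Q hS (k + 1) ≫ P.complex.d (k + 1) k = -(Q.complex.d (k + 2) (k + 1) ≫ θ P Q hS k) :=
  (θPair P Q hS k).2.2

lemma d_θ_succ_apply (k : ℕ) (q : Q.complex.X (k + 2)) :
    P.complex.d (k + 1) k (θ P Q hS (k + 1) q) = -θ P Q hS k (Q.complex.d (k + 2) (k + 1) q) := by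
  simpa using ConcreteCategory.congr_hom (θ_succ_comp_d P Q hS k) q

def d (n : ℕ) : X P Q (n + 1) ⟶ X P Q n :=
  ModuleCat.ofHom <| LinearMap.prod
    ((P.complex.d (n + 1) n).hom ∘ₗ LinearMap.fst R _ _ + (θ P Q hS n).hom ∘ₗ LinearMap.snd R _ _)
    ((Q.complex.d (n + 1) n).hom ∘ₗ LinearMap.snd R _ _)

lemma d_apply (n : ℕ) (p : P.complex.X (n + 1)) (q : Q.complex.X (n + 1)) :
    d P Q hS n ((p, q) : X P Q (n + 1)) =
      ((P.complex.d (n + 1) n p + θ P Q hS n q, Q.complex.d (n + 1) n q) : X P Q n) := rfl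

lemma d_comp_d (n : ℕ) : d P Q hS (n + 1) ≫ d P Q hS n = 0 := by
  refine ModuleCat.hom_ext (LinearMap.ext fun ⟨p, q⟩ => ?_)
  change d P Q hS n (d P Q hS (n + 1) (p, q)) = 0
  rw [d_apply, d_apply]
  refine Prod.ext ?_ ?_ <;>
    simp only [map_add, ← ConcreteCategory.comp_apply, HomologicalComplex.d_comp_d, θ_succ_comp_d]
    <;> simp

lemma d_comp_ε : d P Q hS 0 ≫ ε P Q = 0 := by
  refine ModuleCat.hom_ext (LinearMap.ext fun ⟨p, q⟩ => ?_)
  change ε P Q (d P Q hS 0 (p, q)) = 0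
  rw [d_apply, ε_apply, map_add, map_add, f_ε_θ_zero_apply]
  simp only [← ConcreteCategory.comp_apply]
  simp

lemma exists_d_eq_of_ε_eq_zero (x : X P Q 0) (hx : ε P Q x = 0) : ∃ y, d P Q hS 0 y = x := by
  obtain ⟨p, q⟩ := x
  rw [ε_apply] at hx
  have hq : Q.ε q = 0 := by simpa using congrArg S.g hx
  obtain ⟨q₁, rfl⟩ := (ShortComplex.moduleCat_exact_iff _).1 Q.exact_ε q hq
  have hp : P.ε (p - θ P Q hS 0 q₁) = 0 := by
    apply (ModuleCat.mono_iff_injective S.f).1 inferInstance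
    rw [map_sub, map_sub, f_ε_θ_zero_apply, sub_neg_eq_add, hx, map_zero]
  obtain ⟨p₁, hp₁⟩ := (ShortComplex.moduleCat_exact_iff _).1 P.exact_ε _ hp
  exact ⟨(p₁, q₁), by rw [d_apply, hp₁, sub_add_cancel]⟩

lemma exists_d_eq_of_d_eq_zero (n : ℕ) (x : X P Q (n + 1)) (hx : d P Q hS n x = 0) :
    ∃ y, d P Q hS (n + 1) y = x := by
  obtain ⟨p, q⟩ := x
  rw [d_apply] at hx
  obtain ⟨q₁, rfl⟩ := (ShortComplex.moduleCat_exact_iff _).1 (Q.exact_succ n) q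
    (congrArg Prod.snd hx)
  have hp : P.complex.d (n + 1) n (p - θ P Q hS (n + 1) q₁) = 0 := by
    rw [map_sub, d_θ_succ_apply, sub_neg_eq_add]
    exact congrArg Prod.fst hx
  obtain ⟨p₁, hp₁⟩ := (ShortComplex.moduleCat_exact_iff _).1 (P.exact_succ n) _ hp
  exact ⟨(p₁, q₁), by rw [d_apply, hp₁, sub_add_cancel]⟩

def complex : ChainComplex (ModuleCat R) ℕ := ChainComplex.of (X P Q) (d P Q hS) (d_comp_d P Q hS)

lemma complex_d (n : ℕ) : (complex P Q hS).d (n + 1) n = d P Q hS n := ChainComplex.of_d _ _ _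

def π : complex P Q hS ⟶ (ChainComplex.single₀ (ModuleCat R)).obj S.X₂ :=
  (ChainComplex.toSingle₀Equiv _ _).symm ⟨ε P Q, by rw [complex_d]; exact d_comp_ε P Q hS⟩

lemma π_f_zero : (π P Q hS).f 0 = ε P Q := ChainComplex.toSingle₀Equiv_symm_apply_f_zero _ _

lemma quasiIso_π : QuasiIso (π P Q hS) where
  quasiIsoAt n := by
    cases n with
    | zero =>
      rw [ChainComplex.quasiIsoAt₀_iff, ShortComplex.quasiIso_iff_of_zeros' _ rfl rfl rfl]
      refine ⟨(ShortComplex.moduleCat_exact_iff _).2 fun x hx => ?_, ?_⟩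
      · obtain ⟨y, hy⟩ := exists_d_eq_of_ε_eq_zero P Q hS x (by rwa [← π_f_zero P Q hS])
        exact ⟨y, (ConcreteCategory.congr_hom (complex_d P Q hS 0) y).trans hy⟩
      · change Epi ((π P Q hS).f 0)
        rw [π_f_zero]
        exact (ModuleCat.epi_iff_surjective (ε P Q)).2 (ε_surjective P Q hS)
    | succ n =>
      rw [quasiIsoAt_iff_exactAt' _ _ (ChainComplex.exactAt_succ_single_obj _ _),
        HomologicalComplex.exactAt_iff' _ (n + 2) (n + 1) n (by simp) (by simp),
        ShortComplex.moduleCat_exact_iff]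
      intro x hx
      obtain ⟨y, hy⟩ := exists_d_eq_of_d_eq_zero P Q hS n x
        ((ConcreteCategory.congr_hom (complex_d P Q hS n) x).symm.trans hx)
      exact ⟨y, (ConcreteCategory.congr_hom (complex_d P Q hS (n + 1)) y).trans hy⟩

def resolution : ProjectiveResolution S.X₂ where
  complex := complex P Q hS
  projective n := inferInstanceAs (Projective (X P Q n))
  π := π P Q hS
  quasiIso := quasiIso_π P Q hS

def inl : P.complex ⟶ complex P Q hS where
  f n := ModuleCat.ofHom (LinearMap.inl R _ _)
  comm' i j hij := by
    obtain rfl : j + 1 = i := hij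
    rw [complex_d]
    refine ModuleCat.hom_ext (LinearMap.ext fun p => ?_)
    change d P Q hS j (p, 0) = (P.complex.d (j + 1) j p, 0)
    rw [d_apply, map_zero, map_zero, add_zero]

def snd : complex P Q hS ⟶ Q.complex where
  f n := ModuleCat.ofHom (LinearMap.snd R _ _)
  comm' i j hij := by
    obtain rfl : j + 1 = i := hij
    rw [complex_d]
    rfl

def shortComplex : ShortComplex (ChainComplex (ModuleCat R) ℕ) :=
  ShortComplex.mk (inl P Q hS) (snd P Q hS) (by ext; rfl)

def splitting (n : ℕ) : ((shortComplex P Q hS).map (HomologicalComplex.eval _ _ n)).Splitting where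
  r := ModuleCat.ofHom (LinearMap.fst R (P.complex.X n) (Q.complex.X n))
  s := ModuleCat.ofHom (LinearMap.inr R (P.complex.X n) (Q.complex.X n))
  f_r := rfl
  s_g := rfl
  id := ModuleCat.hom_ext (LinearMap.ext fun ⟨p, q⟩ => by
    change ((p, 0) + (0, q) : X P Q n) = (p, q)
    simp)

lemma inl_f_zero_comp_ε : (inl P Q hS).f 0 ≫ (resolution P Q hS).ε = P.ε ≫ S.f := by
  refine ModuleCat.hom_ext (LinearMap.ext fun p => ?_)
  change ε P Q ((p, 0) : X P Q 0) = S.f (P.ε p)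
  rw [ε_apply, map_zero, add_zero]

lemma snd_f_zero_comp_ε : (snd P Q hS).f 0 ≫ Q.ε = (resolution P Q hS).ε ≫ S.g := by
  refine ModuleCat.hom_ext (LinearMap.ext fun ⟨p, q⟩ => ?_)
  change Q.ε q = S.g (ε P Q ((p, q) : X P Q 0))
  rw [ε_apply, map_add, S.moduleCat_zero_apply, g_σ_apply, zero_add]

end Horseshoe

namespace CategoryTheory.ShortComplex.ShortExact

theorem exact_map_leftDerived {R : Type u} [Ring R] {D : Type*} [Category D] [Abelian D]
    {S : ShortComplex (ModuleCat.{u} R)} (hS : S.ShortExact) (F : ModuleCat.{u} R ⥤ D) [F.Additive]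
    (n : ℕ) : (S.map (F.leftDerived n)).Exact := by
  have := hS.mono_f
  have := hS.epi_g
  let P := ProjectiveResolution.of S.X₁
  let Q := ProjectiveResolution.of S.X₃
  let E := (F.mapHomologicalComplex _).mapShortComplex.obj (Horseshoe.shortComplex P Q hS.exact)
  have hE : E.ShortExact := HomologicalComplex.shortExact_of_degreewise_shortExact _
    fun i => ((Horseshoe.splitting P Q hS.exact i).map F).shortExact
  refine (ShortComplex.exact_iff_of_iso ?_).2 (hE.homology_exact₂ n)
  exact ShortComplex.isoMk (P.isoLeftDerivedObj F n)
    ((Horseshoe.resolution P Q hS.exact).isoLeftDerivedObj F n) (Q.isoLeftDerivedObj F n)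
    (ProjectiveResolution.isoLeftDerivedObj_hom_naturality _ _ _ _
      (Horseshoe.inl_f_zero_comp_ε P Q hS.exact) F n).symm
    (ProjectiveResolution.isoLeftDerivedObj_hom_naturality _ _ _ _
      (Horseshoe.snd_f_zero_comp_ε P Q hS.exact) F n).symm

end CategoryTheory.ShortComplex.ShortExact

theorem stronglyPhiWFlat_of_ses_middle_general (R : Type) [CommRing R]
    (A B C : Type) [AddCommGroup A] [Module R A] [AddCommGroup B] [Module R B]
    [AddCommGroup C] [Module R C]
    (f : A →ₗ[R] B) (g : B →ₗ[R] C) (hf : Function.Injective f)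
    (hg : Function.Surjective g) (hfg : LinearMap.range f = LinearMap.ker g)
    (hA : IsStronglyPhiWFlat R A) (hC : IsStronglyPhiWFlat R C) :
    IsStronglyPhiWFlat R B := by
  intro T _ _ hT n hn
  have hexact : Function.Exact f g := LinearMap.exact_iff.2 hfg.symm
  let S := ModuleCat.shortComplexOfCompEqZero f g hexact.linearMap_comp_eq_zero
  have hS : S.ShortExact := ModuleCat.shortComplex_shortExact S hexact hf hg
  have hTor :=
    hS.exact_map_leftDerived ((MonoidalCategory.tensoringLeft _).obj (ModuleCat.of R T)) n
  rw [ShortComplex.ShortExact.moduleCat_exact_iff_function_exact] at hTor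
  exact IsGVTorsion.of_exact hTor (hA T _ _ hT n hn) (hC T _ _ hT n hn)

theorem stronglyPhiWFlat_of_ses_middle (R : Type) [CommRing R] (hNP : (nilradical R).IsPrime)
    (A B C : Type) [AddCommGroup A] [Module R A] [AddCommGroup B] [Module R B]
    [AddCommGroup C] [Module R C]
    (f : A →ₗ[R] B) (g : B →ₗ[R] C) (hf : Function.Injective f)
    (hg : Function.Surjective g) (hfg : LinearMap.range f = LinearMap.ker g)
    (hA : IsStronglyPhiWFlat R A) (hC : IsStronglyPhiWFlat R C) :
    IsStronglyPhiWFlat R B :=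
  stronglyPhiWFlat_of_ses_middle_general R A B C f g hf hg hfg hA hC
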